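/- Let A = (Q, q₀, δ, c) be a deterministic parity automaton over ℕ. Player II wins the Gale–Stewart game Γ(L_A) if and only if the vertex (q₀, I, 0) belongs to the winning region of Player II in the parity game over the game graph G(A). Analogously, Player I wins Γ(L_A) if and only if (q₀, I, 0) belongs to the winning region of Player I in the parity game over G(A). -/

import Mathlib

/-- The maximal color occurring infinitely often in the sequence `s` exists and is even. -/
def MaxInfEven (s : ℕ → ℕ) : Prop :=
  ∃ m, Even m ∧ {k | s k = m}.Infinite ∧ ∀ m', {k | s k = m'}.Infinite → m' ≤ m

/-- The two players of an infinite game. -/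
inductive Player
  | one
  | two

/-- The opponent of a player. -/
def Player.other : Player → Player
  | .one => .two
  | .two => .one

/-- A parity game graph: every element of `V` is a vertex, owned by a player,
with edge relation `E` and coloring `color`. -/
structure GameGraph (V : Type) where
  owner : V → Player
  E : V → V → Prop
  color : V → ℕ

/-- The play `π` is won by player `p`: for Player II this means the maximal color
occurring infinitely often is even, for Player I that it is not. -/
def GameGraph.WonBy {V : Type} (G : GameGraph V) (p : Player) (π : ℕ → V) : Prop :=
  match p with
  | .two => MaxInfEven (fun n => G.color (π n))
  | .one => ¬ MaxInfEven (fun n => G.color (π n))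

/-- The finite prefix `π 0, …, π n` of an infinite sequence, as a list. -/
def hist {V : Type} (π : ℕ → V) (n : ℕ) : List V :=
  List.ofFn (fun i : Fin (n + 1) => π i.val)

/-- Finite play prefixes from `u₀` in which player `p` always moves according to
the strategy `σ` (given as a function from nonempty play prefixes to vertices). -/
inductive ConsHist {V : Type} (G : GameGraph V) (p : Player) (σ : List V → V) (u₀ : V) :
    List V → Prop
  | init : ConsHist G p σ u₀ [u₀]
  | ownStep (l : List V) (v : V) : ConsHist G p σ u₀ l → l.getLast? = some v →
      G.owner v = p → ConsHist G p σ u₀ (l ++ [σ l])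
  | oppStep (l : List V) (v w : V) : ConsHist G p σ u₀ l → l.getLast? = some v →
      G.owner v ≠ p → G.E v w → ConsHist G p σ u₀ (l ++ [w])

/-- `σ` is a (legal) strategy for player `p` from `u₀`: at every play prefix from `u₀`
consistent with `σ` and ending in a vertex of `p`, the prescribed move is along an edge. -/
def IsStrategyFrom {V : Type} (G : GameGraph V) (p : Player) (σ : List V → V) (u₀ : V) : Prop :=
  ∀ l v, ConsHist G p σ u₀ l → l.getLast? = some v → G.owner v = p → G.E v (σ l)

/-- `π` is an infinite play from `u₀`. -/
def IsPlayFrom {V : Type} (G : GameGraph V) (u₀ : V) (π : ℕ → V) : Prop :=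
  π 0 = u₀ ∧ ∀ n, G.E (π n) (π (n + 1))

/-- In the play `π`, player `p` always moves according to the strategy `σ`. -/
def ConsistentPlay {V : Type} (G : GameGraph V) (p : Player) (σ : List V → V) (π : ℕ → V) :
    Prop :=
  ∀ n, G.owner (π n) = p → π (n + 1) = σ (hist π n)

/-- `σ` is a winning strategy for player `p` from `u₀`. -/
def WinningStrategyFrom {V : Type} (G : GameGraph V) (p : Player) (σ : List V → V) (u₀ : V) :
    Prop :=
  IsStrategyFrom G p σ u₀ ∧
    ∀ π, IsPlayFrom G u₀ π → ConsistentPlay G p σ π → G.WonBy p π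

/-- The strategy induced by a memoryless strategy `f` (depending only on the last vertex). -/
def liftMemoryless {V : Type} (f : V → V) (u₀ : V) : List V → V :=
  fun l => f (l.getLast?.getD u₀)

/-- The memoryless strategy `f` is a winning strategy for player `p` from `u₀`. -/
def MemorylessWinningFrom {V : Type} (G : GameGraph V) (p : Player) (f : V → V) (u₀ : V) :
    Prop :=
  WinningStrategyFrom G p (liftMemoryless f u₀) u₀

/-- The winning region of player `p`: the vertices from which `p` has a winning strategy. -/
def WinningRegion {V : Type} (G : GameGraph V) (p : Player) : Set V :=
  {u | ∃ σ, WinningStrategyFrom G p σ u}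

/-- The list `m 0, …, m k`. -/
def prefixList (m : ℕ → ℕ) (k : ℕ) : List ℕ :=
  List.ofFn (fun i : Fin (k + 1) => m i.val)

/-- The interleaving `m 0, n 0, m 1, n 1, …` of two sequences. -/
def interleave (m n : ℕ → ℕ) : ℕ → ℕ :=
  fun k => if k % 2 = 0 then m (k / 2) else n (k / 2)

/-- `σ` is a winning strategy for Player II in the Gale–Stewart game with winning
condition `L`: for every sequence of choices of Player I, the play in which Player II
answers `m₀ … m_k` with `σ (m₀ … m_k)` belongs to `L`. -/
def IsWinningStrategyII (L : Set (ℕ → ℕ)) (σ : List ℕ → ℕ) : Prop :=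
  ∀ m : ℕ → ℕ, interleave m (fun k => σ (prefixList m k)) ∈ L

/-- Player II wins the Gale–Stewart game with winning condition `L`. -/
def WinsII (L : Set (ℕ → ℕ)) : Prop := ∃ σ, IsWinningStrategyII L σ

/-- The sequence of choices of Player I determined by the strategy `τ` against the
choices `n` of Player II: `m₀ = τ ε` and `m_{k+1} = τ (n₀ … n_k)`. -/
def playerIMoves (τ : List ℕ → ℕ) (n : ℕ → ℕ) : ℕ → ℕ
  | 0 => τ []
  | k + 1 => τ (prefixList n k)

/-- `τ` is a winning strategy for Player I in the Gale–Stewart game with winning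
condition `L`. -/
def IsWinningStrategyI (L : Set (ℕ → ℕ)) (τ : List ℕ → ℕ) : Prop :=
  ∀ n : ℕ → ℕ, interleave (playerIMoves τ n) n ∉ L

/-- Player I wins the Gale–Stewart game with winning condition `L`. -/
def WinsI (L : Set (ℕ → ℕ)) : Prop := ∃ τ, IsWinningStrategyI L τ

/-- A deterministic parity automaton over the alphabet ℕ, with control states `Q`,
configurations in `Q × ℕ`, transition function `next` and coloring `color`. -/
structure DPA (Q : Type) where
  q0 : Q
  next : Q × ℕ → ℕ → Q × ℕ
  color : Q → ℕ

/-- The run of `A` on `α`: the sequence of configurations starting in `(q₀, 0)`. -/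
def DPA.run {Q : Type} (A : DPA Q) (α : ℕ → ℕ) : ℕ → Q × ℕ
  | 0 => (A.q0, 0)
  | k + 1 => A.next (DPA.run A α k) (α k)

/-- The ω-language recognized by `A`: the ω-words whose run has an even maximal color
occurring infinitely often. -/
def DPA.Lang {Q : Type} (A : DPA Q) : Set (ℕ → ℕ) :=
  {α | MaxInfEven (fun k => A.color (A.run α k).1)}

/-- The game graph `G(A)` of a deterministic parity automaton `A`: vertices `(p, X, i)`
(configuration `(p, i)`, player `X` to move), with an edge from `(p, X, i)` to
`(q, Y, j)` iff `Y` is the opponent of `X` and some input `m` leads from `(p, i)` to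
`(q, j)`; the color of `(p, X, i)` is the color of `p`. -/
def DPA.gameGraph {Q : Type} (A : DPA Q) : GameGraph (Q × Player × ℕ) where
  owner v := v.2.1
  E v w := w.2.1 = v.2.1.other ∧ ∃ m : ℕ, A.next (v.1, v.2.2) m = (w.1, w.2.2)
  color v := A.color v.1

/-!
Plays of `G(A)` from `(q₀, I, 0)` and plays of `Γ(L_A)` correspond: a play of the graph follows
the run of `A` on any word whose letters label its edges, so both carry the same colours.
A Gale–Stewart strategy becomes a graph strategy by reading the opponent's letters off the
edges of the history; conversely, a graph strategy becomes a Gale–Stewart strategy by replaying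
the graph game against the opponent's letters and answering with a letter of the prescribed edge.
Viewing a strategy of either player as a map from the opponent's choices so far to a move
handles both players at once.
-/

deriving instance DecidableEq for Player

def Player.WinsWord : Player → Set (ℕ → ℕ) → (ℕ → ℕ) → Prop
  | .two, L, α => α ∈ L
  | .one, L, α => α ∉ L

def turn (k : ℕ) : Player := if k % 2 = 0 then .one else .two

lemma turn_succ (k : ℕ) : turn (k + 1) = (turn k).other := by
  rcases Nat.mod_two_eq_zero_or_one k with hk | hk <;>
    simp [turn, hk, Nat.succ_mod_two_eq_zero_iff, Player.other]

/-- The position of the `r`-th move of the opponent of `p`. -/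
def oppPos : Player → ℕ → ℕ
  | .two, r => 2 * r
  | .one, r => 2 * r + 1

/-- The position of the move of `p` that follows `r` moves of the opponent (Player II moves only
after at least one move of Player I, so `r = 0` does not occur for her). -/
def ownPos : Player → ℕ → ℕ
  | .two, r => 2 * r - 1
  | .one, r => 2 * r

section Positions

variable {p : Player} {k : ℕ}

lemma oppPos_div_two (h : turn k ≠ p) : oppPos p (k / 2) = k := by
  rcases Nat.mod_two_eq_zero_or_one k with hk | hk <;> cases p <;> simp_all [turn, oppPos] <;> omega

lemma oppPos_lt (h : turn k = p) {r : ℕ} (hr : r < (k + 1) / 2) : oppPos p r < k := by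
  rcases Nat.mod_two_eq_zero_or_one k with hk | hk <;> cases p <;> simp_all [turn, oppPos] <;> omega

lemma ownPos_of_turn (h : turn k = p) : ownPos p ((k + 1) / 2) = k := by
  rcases Nat.mod_two_eq_zero_or_one k with hk | hk <;> cases p <;> simp_all [turn, ownPos] <;> omega

end Positions

/-- At position `k` the opponent has made `(k + 1) / 2` choices so far. -/
def gsPlay (p : Player) (s : List ℕ → ℕ) (β : ℕ → ℕ) (k : ℕ) : ℕ :=
  if turn k = p then s (List.ofFn fun i : Fin ((k + 1) / 2) => β i) else β (k / 2)

def GSWins (p : Player) (L : Set (ℕ → ℕ)) : Prop :=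
  ∃ s, ∀ β, p.WinsWord L (gsPlay p s β)

lemma interleave_eq_gsPlay_two (σ : List ℕ → ℕ) (m : ℕ → ℕ) :
    interleave m (fun k => σ (prefixList m k)) = gsPlay .two σ m := by
  funext k
  rcases Nat.mod_two_eq_zero_or_one k with hk | hk
  · simp [interleave, gsPlay, turn, hk]
  · have hlen : (k + 1) / 2 = k / 2 + 1 := by omega
    simp only [interleave, gsPlay, turn, hk, hlen, prefixList]
    simp

lemma interleave_eq_gsPlay_one (τ : List ℕ → ℕ) (n : ℕ → ℕ) :
    interleave (playerIMoves τ n) n = gsPlay .one τ n := by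
  funext k
  rcases Nat.mod_two_eq_zero_or_one k with hk | hk
  · obtain ⟨j, rfl⟩ : ∃ j, k = 2 * j := ⟨k / 2, by omega⟩
    cases j with
    | zero => simp [interleave, gsPlay, turn, playerIMoves]
    | succ j =>
      have hlen : (2 * (j + 1) + 1) / 2 = j + 1 := by omega
      simp only [interleave, gsPlay, turn, hk, hlen, playerIMoves, prefixList]
      simp
  · simp [interleave, gsPlay, turn, hk]

lemma winsII_iff_gsWins (L : Set (ℕ → ℕ)) : WinsII L ↔ GSWins .two L := by
  simp only [WinsII, IsWinningStrategyII, GSWins, Player.WinsWord, interleave_eq_gsPlay_two]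

lemma winsI_iff_gsWins (L : Set (ℕ → ℕ)) : WinsI L ↔ GSWins .one L := by
  simp only [WinsI, IsWinningStrategyI, GSWins, Player.WinsWord, interleave_eq_gsPlay_one]

section History

variable {V : Type}

lemma hist_succ (π : ℕ → V) (n : ℕ) : hist π (n + 1) = hist π n ++ [π (n + 1)] := by
  rw [hist, List.ofFn_succ', List.concat_eq_append]
  rfl

lemma hist_getLast? (π : ℕ → V) (n : ℕ) : (hist π n).getLast? = some (π n) := by
  cases n with
  | zero => rfl
  | succ n => rw [hist_succ, List.getLast?_concat]

lemma hist_getD (π : ℕ → V) {i n : ℕ} (h : i ≤ n) (d : V) :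
    (hist π n).getD i d = π i := by
  rw [hist, List.getD_eq_getElem?_getD, List.getElem?_ofFn]
  simp [show i < n + 1 by omega]

end History

namespace DPA

variable {Q : Type} (A : DPA Q)

def cfg (v : Q × Player × ℕ) : Q × ℕ := (v.1, v.2.2)

def start : Q × Player × ℕ := (A.q0, .one, 0)

def move (v : Q × Player × ℕ) (a : ℕ) : Q × Player × ℕ :=
  ((A.next (cfg v) a).1, v.2.1.other, (A.next (cfg v) a).2)

lemma gameGraph_E_move (v : Q × Player × ℕ) (a : ℕ) : A.gameGraph.E v (A.move v a) :=
  ⟨rfl, a, rfl⟩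

open Classical in
/-- A letter realizing the edge from `v` to `w`, if there is one. -/
noncomputable def letter (v w : Q × Player × ℕ) : ℕ :=
  if h : ∃ a, A.next (cfg v) a = cfg w then h.choose else 0

variable {A}

lemma next_letter {v w : Q × Player × ℕ} (h : A.gameGraph.E v w) :
    A.next (cfg v) (A.letter v w) = cfg w := by
  have h' : ∃ a, A.next (cfg v) a = cfg w := h.2
  rw [letter, dif_pos h']
  exact h'.choose_spec

lemma move_letter {v w : Q × Player × ℕ} (h : A.gameGraph.E v w) :
    A.move v (A.letter v w) = w := by
  rw [move, next_letter h, ← h.1]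
  rfl

lemma turn_of_isPlayFrom {π : ℕ → Q × Player × ℕ} (hπ : IsPlayFrom A.gameGraph A.start π)
    (k : ℕ) : (π k).2.1 = turn k := by
  induction k with
  | zero => rw [hπ.1]; rfl
  | succ k ih =>
    rw [(hπ.2 k).1, ih, turn_succ]

def Tracks (π : ℕ → Q × Player × ℕ) (α : ℕ → ℕ) : Prop :=
  π 0 = A.start ∧ ∀ k, A.next (cfg (π k)) (α k) = cfg (π (k + 1))

section Tracks

variable {π : ℕ → Q × Player × ℕ} {α : ℕ → ℕ}

lemma Tracks.run_eq (h : A.Tracks π α) (k : ℕ) : A.run α k = cfg (π k) := by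
  induction k with
  | zero => rw [h.1]; rfl
  | succ k ih => rw [DPA.run, ih, h.2 k]

lemma Tracks.wonBy_iff (h : A.Tracks π α) (p : Player) :
    A.gameGraph.WonBy p π ↔ p.WinsWord A.Lang α := by
  have hcol : (fun k => A.color (A.run α k).1) = fun k => A.gameGraph.color (π k) := by
    funext k
    rw [h.run_eq k]
    rfl
  cases p <;>
    simp only [GameGraph.WonBy, Player.WinsWord, DPA.Lang, Set.mem_ofPred_eq, hcol]

end Tracks

variable (A)

/-- The opponent's choices in a play prefix `l` ending at a vertex of `p`, read off its edges. -/
noncomputable def oppLetters (p : Player) (l : List (Q × Player × ℕ)) : List ℕ :=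
  List.ofFn fun r : Fin (l.length / 2) =>
    A.letter (l.getD (oppPos p r) A.start) (l.getD (oppPos p r + 1) A.start)

noncomputable def graphStrategy (p : Player) (s : List ℕ → ℕ)
    (l : List (Q × Player × ℕ)) : Q × Player × ℕ :=
  A.move (l.getLast?.getD A.start) (s (A.oppLetters p l))

variable {A}

lemma oppLetters_hist {p : Player} (π : ℕ → Q × Player × ℕ) {k : ℕ} (hk : turn k = p) :
    A.oppLetters p (hist π k) =
      List.ofFn fun r : Fin ((k + 1) / 2) => A.letter (π (oppPos p r)) (π (oppPos p r + 1)) := by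
  have hlen : (hist π k).length = k + 1 := by simp [hist]
  refine List.ext_getElem (by simp [oppLetters, hlen]) fun r h₁ h₂ => ?_
  simp only [List.length_ofFn] at h₂
  have hr := oppPos_lt hk h₂
  simp only [oppLetters, List.getElem_ofFn, hist_getD π hr.le, hist_getD π hr]

lemma mem_winningRegion_of_gsWins {p : Player} (h : GSWins p A.Lang) :
    A.start ∈ WinningRegion A.gameGraph p := by
  obtain ⟨s, hs⟩ := h
  refine ⟨A.graphStrategy p s, fun l v _ hl _ => ?_, fun π hπ hcons => ?_⟩
  · rw [graphStrategy, hl, Option.getD_some]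
    exact A.gameGraph_E_move v _
  set β : ℕ → ℕ := fun r => A.letter (π (oppPos p r)) (π (oppPos p r + 1))
  have htracks : A.Tracks π (gsPlay p s β) := by
    refine ⟨hπ.1, fun k => ?_⟩
    by_cases hk : turn k = p
    · have hown : A.gameGraph.owner (π k) = p := (turn_of_isPlayFrom hπ k).trans hk
      rw [hcons k hown, graphStrategy, hist_getLast?, Option.getD_some, oppLetters_hist π hk,
        gsPlay, if_pos hk]
      rfl
    · rw [gsPlay, if_neg hk]
      simpa only [β, oppPos_div_two hk] using next_letter (hπ.2 k)
  exact (htracks.wonBy_iff p).2 (hs β)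

variable (A) in
/-- The first `k + 1` vertices of the play in which `p` follows `σ` and the opponent moves
with `β (k / 2)` at position `k`. -/
noncomputable def histAgainst (p : Player) (σ : List (Q × Player × ℕ) → Q × Player × ℕ)
    (β : ℕ → ℕ) : ℕ → List (Q × Player × ℕ)
  | 0 => [A.start]
  | k + 1 =>
    let l := histAgainst p σ β k
    let v := l.getLast?.getD A.start
    l ++ [A.move v (if turn k = p then A.letter v (σ l) else β (k / 2))]

variable (A) in
noncomputable def playAgainst (p : Player) (σ : List (Q × Player × ℕ) → Q × Player × ℕ)
    (β : ℕ → ℕ) (k : ℕ) : Q × Player × ℕ :=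
  (A.histAgainst p σ β k).getLast?.getD A.start

section PlayAgainst

variable {p : Player} {σ : List (Q × Player × ℕ) → Q × Player × ℕ} {β : ℕ → ℕ}

lemma histAgainst_eq_hist (k : ℕ) : A.histAgainst p σ β k = hist (A.playAgainst p σ β) k := by
  induction k with
  | zero => rfl
  | succ k ih =>
    rw [hist_succ, ← ih, playAgainst, histAgainst, List.getLast?_concat, Option.getD_some]

lemma playAgainst_succ (k : ℕ) :
    A.playAgainst p σ β (k + 1) = A.move (A.playAgainst p σ β k)
      (if turn k = p then A.letter (A.playAgainst p σ β k) (σ (hist (A.playAgainst p σ β) k))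
       else β (k / 2)) := by
  rw [← histAgainst_eq_hist, playAgainst, histAgainst, List.getLast?_concat, Option.getD_some]
  rfl

lemma playAgainst_congr {β' : ℕ → ℕ} (k : ℕ)
    (h : ∀ i < k, turn i ≠ p → β (i / 2) = β' (i / 2)) :
    A.playAgainst p σ β k = A.playAgainst p σ β' k := by
  suffices A.histAgainst p σ β k = A.histAgainst p σ β' k by rw [playAgainst, playAgainst, this]
  induction k with
  | zero => rfl
  | succ k ih =>
    rw [histAgainst, histAgainst, ih fun i hi => h i (by omega)]
    split_ifs with hk
    · rfl
    · rw [h k (by omega) hk]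

lemma isPlayFrom_playAgainst : IsPlayFrom A.gameGraph A.start (A.playAgainst p σ β) :=
  ⟨rfl, fun k => by rw [playAgainst_succ]; exact A.gameGraph_E_move _ _⟩

variable (hσ : IsStrategyFrom A.gameGraph p σ A.start)
include hσ

lemma playAgainst_succ_of_turn {k : ℕ}
    (hC : ConsHist A.gameGraph p σ A.start (hist (A.playAgainst p σ β) k)) (hk : turn k = p) :
    A.playAgainst p σ β (k + 1) = σ (hist (A.playAgainst p σ β) k) := by
  rw [playAgainst_succ, if_pos hk]
  exact move_letter (hσ _ _ hC (hist_getLast? _ k)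
    ((turn_of_isPlayFrom isPlayFrom_playAgainst k).trans hk))

lemma consHist_playAgainst (k : ℕ) :
    ConsHist A.gameGraph p σ A.start (hist (A.playAgainst p σ β) k) := by
  induction k with
  | zero => exact .init
  | succ k ih =>
    have hturn : A.gameGraph.owner (A.playAgainst p σ β k) = turn k :=
      turn_of_isPlayFrom isPlayFrom_playAgainst k
    rw [hist_succ]
    by_cases hk : turn k = p
    · rw [playAgainst_succ_of_turn hσ ih hk]
      exact .ownStep _ _ ih (hist_getLast? _ k) (hturn.trans hk)
    · exact .oppStep _ _ _ ih (hist_getLast? _ k) (hturn.trans_ne hk)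
        (isPlayFrom_playAgainst.2 k)

lemma consistentPlay_playAgainst : ConsistentPlay A.gameGraph p σ (A.playAgainst p σ β) :=
  fun k hk => playAgainst_succ_of_turn hσ (consHist_playAgainst hσ k)
    ((turn_of_isPlayFrom isPlayFrom_playAgainst k).symm.trans hk)

end PlayAgainst

variable (A) in
/-- Replay the graph game against the opponent's choices `ms` and answer with a letter of the
edge that `σ` prescribes next. -/
noncomputable def gsStrategy (p : Player) (σ : List (Q × Player × ℕ) → Q × Player × ℕ)
    (ms : List ℕ) : ℕ :=
  A.letter (A.playAgainst p σ (fun i => ms.getD i 0) (ownPos p ms.length))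
    (A.playAgainst p σ (fun i => ms.getD i 0) (ownPos p ms.length + 1))

lemma gsWins_of_mem_winningRegion {p : Player}
    (h : A.start ∈ WinningRegion A.gameGraph p) : GSWins p A.Lang := by
  obtain ⟨σ, hσ, hwin⟩ := h
  refine ⟨A.gsStrategy p σ, fun β => ?_⟩
  have htracks : A.Tracks (A.playAgainst p σ β) (gsPlay p (A.gsStrategy p σ) β) := by
    refine ⟨rfl, fun k => ?_⟩
    by_cases hk : turn k = p
    · set ms := List.ofFn fun i : Fin ((k + 1) / 2) => β i
      have hsame : ∀ j ≤ k + 1,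
          A.playAgainst p σ (fun i => ms.getD i 0) j = A.playAgainst p σ β j := by
        refine fun j hj => playAgainst_congr j fun i hi hi' => ?_
        have : i ≠ k := fun hik => hi' (hik ▸ hk)
        simp [ms, List.getD_eq_getElem?_getD, show i / 2 < (k + 1) / 2 by omega]
      rw [gsPlay, if_pos hk, gsStrategy, List.length_ofFn, ownPos_of_turn hk, hsame k (by omega),
        hsame (k + 1) le_rfl]
      exact next_letter (isPlayFrom_playAgainst.2 k)
    · rw [gsPlay, if_neg hk, playAgainst_succ, if_neg hk]
      rfl
  exact (htracks.wonBy_iff p).1 (hwin _ isPlayFrom_playAgainst (consistentPlay_playAgainst hσ))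

variable (A) in
theorem gsWins_iff_start_mem_winningRegion (p : Player) :
    GSWins p A.Lang ↔ A.start ∈ WinningRegion A.gameGraph p :=
  ⟨mem_winningRegion_of_gsWins, gsWins_of_mem_winningRegion⟩

end DPA

theorem statement1_general {Q : Type} (A : DPA Q) :
    (WinsII A.Lang ↔ (A.q0, Player.one, 0) ∈ WinningRegion A.gameGraph Player.two) ∧
    (WinsI A.Lang ↔ (A.q0, Player.one, 0) ∈ WinningRegion A.gameGraph Player.one) := by
  exact ⟨(winsII_iff_gsWins _).trans (A.gsWins_iff_start_mem_winningRegion .two),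
    (winsI_iff_gsWins _).trans (A.gsWins_iff_start_mem_winningRegion .one)⟩

/-- Player II wins the Gale–Stewart game `Γ(L_A)` iff the vertex `(q₀, I, 0)` belongs to
the winning region of Player II in the parity game over `G(A)`; analogously for Player I. -/
theorem statement1 {Q : Type} [Fintype Q] (A : DPA Q) :
    (WinsII A.Lang ↔ (A.q0, Player.one, 0) ∈ WinningRegion A.gameGraph Player.two) ∧
    (WinsI A.Lang ↔ (A.q0, Player.one, 0) ∈ WinningRegion A.gameGraph Player.one) :=
  statement1_general A
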